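/- arXiv:2512.24535 — 2 statements merged into one kernel-verified Lean document; each statement's English description precedes it below -/
import Mathlib

section
/- For all integers l ≥ 0 and k ≥ 1, the real polynomial Q^{(l)}_k := P^U_{k+3} − (l+1)·(P^U_{k+2} + P^U_{k+1}), which is monic of degree k+2, has k+2 distinct real roots y_0 > y_1 > … > y_{k+1} satisfying: y_0 > l+2; 2·cos((r+1)·π/(k+2)) < y_r < 2·cos(r·π/(k+2)) for each r = 1, …, k; and −2 < y_{k+1} < 2·cos((k+1)·π/(k+2)). -/
/-- `PU n` is the real polynomial with `PU 0 = 0`, `PU 1 = 1` and the Chebyshev recursion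
`PU (n+1) = X * PU n - PU (n-1)`; equivalently `PU n x = U (n-1) (x/2)` where `U` is
Mathlib's integer-indexed Chebyshev polynomial of the second kind. -/
noncomputable def PU (n : ℤ) : Polynomial ℝ :=
  (Polynomial.Chebyshev.U ℝ (n - 1)).comp (Polynomial.C (1 / 2) * Polynomial.X)

/-- `Qpoly l k = PU (k+3) - (l+1) * (PU (k+2) + PU (k+1))`, the paper's closed formula
for the column-partition series `P^{(1^{l+2})}_{l+4+k}`. -/
noncomputable def Qpoly (l : ℤ) (k : ℕ) : Polynomial ℝ :=
  PU (k + 3) - Polynomial.C ((l : ℝ) + 1) * (PU (k + 2) + PU (k + 1))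

open Polynomial Real

lemma PU_eval (n : ℤ) (x : ℝ) : (PU n).eval x = (Polynomial.Chebyshev.U ℝ (n-1)).eval (x/2) := by
  simp [PU, eval_comp]
  ring_nf

lemma PU_eval_rec (n : ℤ) (x : ℝ) :
    (PU (n+2)).eval x = x * (PU (n+1)).eval x - (PU n).eval x := by
  rw [PU_eval, PU_eval, PU_eval]
  have h : (n + 2 - 1 : ℤ) = (n - 1) + 2 := by ring
  rw [h, Polynomial.Chebyshev.U_add_two]
  have h2 : (n - 1 + 1 : ℤ) = n + 1 - 1 := by ring
  rw [h2]
  simp only [eval_sub, eval_mul, eval_ofNat, eval_X]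
  ring

lemma PU_eval_cos (n : ℤ) (θ : ℝ) : (PU n).eval (2 * cos θ) * sin θ = sin (n * θ) := by
  rw [PU_eval]
  have : (2 : ℝ) * cos θ / 2 = cos θ := by ring
  rw [this, Polynomial.Chebyshev.U_real_cos]
  norm_num

lemma PU_zero_eval (x : ℝ) : (PU 0).eval x = 0 := by
  rw [PU_eval]; norm_num [Polynomial.Chebyshev.U_neg_one]

lemma PU_one_eval (x : ℝ) : (PU 1).eval x = 1 := by
  rw [PU_eval]; norm_num [Polynomial.Chebyshev.U_zero]

lemma Qpoly_eval (l : ℤ) (k : ℕ) (x : ℝ) :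
    (Qpoly l k).eval x =
      (PU (k+3)).eval x - ((l:ℝ)+1) * ((PU (k+2)).eval x + (PU (k+1)).eval x) := by
  simp [Qpoly]

lemma Qpoly_eval_cos (l : ℤ) (k : ℕ) (θ : ℝ) :
    (Qpoly l k).eval (2 * cos θ) * sin θ =
      sin (((k:ℝ)+3) * θ) - ((l:ℝ)+1) * (sin (((k:ℝ)+2) * θ) + sin (((k:ℝ)+1) * θ)) := by
  rw [Qpoly_eval]
  have h3 := PU_eval_cos ((k:ℤ)+3) θ
  have h2 := PU_eval_cos ((k:ℤ)+2) θ
  have h1 := PU_eval_cos ((k:ℤ)+1) θ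
  push_cast at h3 h2 h1 ⊢
  rw [← h3, ← h2, ← h1]; ring

lemma Qpoly_eval_node (l : ℤ) (k : ℕ) (r : ℕ) (hr1 : 1 ≤ r) (hr2 : r ≤ k + 1) :
    (Qpoly l k).eval (2 * cos (r * π / (k + 2))) = (-1)^r * ((l:ℝ) + 2) := by
  set θ : ℝ := r * π / (k + 2) with hθ
  have hk2 : ((k:ℝ) + 2) ≠ 0 := by positivity
  have hkθ : ((k:ℝ) + 2) * θ = r * π := by
    rw [hθ]; field_simp
  have hθpos : 0 < θ := by
    rw [hθ]
    have : (0:ℝ) < r := by exact_mod_cast hr1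
    positivity
  have hθlt : θ < π := by
    rw [hθ, div_lt_iff₀ (by positivity)]
    have : (r:ℝ) < (k:ℝ) + 2 := by exact_mod_cast (by omega : r < k + 2)
    nlinarith [pi_pos]
  have hsin : 0 < sin θ := sin_pos_of_pos_of_lt_pi hθpos hθlt
  have e3 : sin (((k:ℝ)+3) * θ) = (-1)^r * sin θ := by
    have : ((k:ℝ)+3) * θ = θ + r * π := by rw [← hkθ]; ring
    rw [this, sin_add_nat_mul_pi]
  have e2 : sin (((k:ℝ)+2) * θ) = 0 := by rw [hkθ, sin_nat_mul_pi]
  have e1 : sin (((k:ℝ)+1) * θ) = -((-1)^r * sin θ) := by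
    have : ((k:ℝ)+1) * θ = (r:ℤ) * π - θ := by push_cast; rw [← hkθ]; ring
    rw [this, sin_int_mul_pi_sub, zpow_natCast]
  have key := Qpoly_eval_cos l k θ
  rw [e3, e2, e1] at key
  have : (Qpoly l k).eval (2 * cos θ) * sin θ = ((-1)^r * ((l:ℝ) + 2)) * sin θ := by
    rw [key]; ring
  exact mul_right_cancel₀ (ne_of_gt hsin) this

lemma PU_eval_neg_two : ∀ n : ℕ, (PU n).eval (-2) = (-1)^(n+1) * n := by
  intro n
  induction n using Nat.twoStepInduction with
  | zero => simpa using PU_zero_eval (-2)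
  | one => simpa using PU_one_eval (-2)
  | more n ih1 ih2 =>
    have hc : ((n + 2 : ℕ) : ℤ) = (n : ℤ) + 2 := by push_cast; ring
    have hc1 : ((n + 1 : ℕ) : ℤ) = (n : ℤ) + 1 := by push_cast; ring
    rw [hc, PU_eval_rec, ← hc1, ih2, ih1]
    push_cast
    ring

lemma Qpoly_eval_neg_two (l : ℤ) (k : ℕ) :
    (Qpoly l k).eval (-2) = (-1)^k * ((k:ℝ) + (l:ℝ) + 4) := by
  rw [Qpoly_eval]
  have h3 : ((k:ℤ)+3) = ((k+3 : ℕ) : ℤ) := by push_cast; ring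
  have h2 : ((k:ℤ)+2) = ((k+2 : ℕ) : ℤ) := by push_cast; ring
  have h1 : ((k:ℤ)+1) = ((k+1 : ℕ) : ℤ) := by push_cast; ring
  rw [h3, h2, h1, PU_eval_neg_two, PU_eval_neg_two, PU_eval_neg_two]
  push_cast
  ring

lemma Qpoly_rec (l : ℤ) (k : ℕ) (x : ℝ) :
    (Qpoly l (k+2)).eval x = x * (Qpoly l (k+1)).eval x - (Qpoly l k).eval x := by
  rw [Qpoly_eval, Qpoly_eval, Qpoly_eval]
  have h3 : ((k+2:ℕ):ℤ)+3 = ((k:ℤ)+3)+2 := by push_cast; ring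
  have h2 : ((k+2:ℕ):ℤ)+2 = ((k:ℤ)+2)+2 := by push_cast; ring
  have h1 : ((k+2:ℕ):ℤ)+1 = ((k:ℤ)+1)+2 := by push_cast; ring
  have g3 : ((k+1:ℕ):ℤ)+3 = ((k:ℤ)+3)+1 := by push_cast; ring
  have g2 : ((k+1:ℕ):ℤ)+2 = ((k:ℤ)+2)+1 := by push_cast; ring
  have g1 : ((k+1:ℕ):ℤ)+1 = ((k:ℤ)+1)+1 := by push_cast; ring
  rw [h3, h2, h1, g3, g2, g1, PU_eval_rec ((k:ℤ)+3), PU_eval_rec ((k:ℤ)+2), PU_eval_rec ((k:ℤ)+1)]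
  ring

lemma PU_two_eval (x : ℝ) : (PU 2).eval x = x := by
  have h := PU_eval_rec 0 x
  rw [show (0:ℤ)+2 = 2 by norm_num, show (0:ℤ)+1 = 1 by norm_num, PU_one_eval, PU_zero_eval] at h
  rw [h]; ring

lemma PU_three_eval (x : ℝ) : (PU 3).eval x = x^2 - 1 := by
  have h := PU_eval_rec 1 x
  rw [show (1:ℤ)+2 = 3 by norm_num, show (1:ℤ)+1 = 2 by norm_num, PU_two_eval, PU_one_eval] at h
  rw [h]; ring

lemma PU_four_eval (x : ℝ) : (PU 4).eval x = x^3 - 2*x := by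
  have := PU_eval_rec 2 x
  rw [show (2:ℤ)+2 = 4 by norm_num, show (2:ℤ)+1 = 3 by norm_num,
    PU_two_eval, PU_three_eval] at this
  rw [this]; ring

lemma Qpoly_eval_t (l : ℤ) (k : ℕ) :
    (Qpoly l k).eval ((l:ℝ)+2) = -((PU k).eval ((l:ℝ)+2)) := by
  induction k using Nat.twoStepInduction with
  | zero =>
    rw [Qpoly_eval]
    norm_num [PU_three_eval, PU_two_eval, PU_one_eval, PU_zero_eval]
    ring
  | one =>
    rw [Qpoly_eval]
    norm_num [PU_four_eval, PU_three_eval, PU_two_eval, PU_one_eval]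
    ring
  | more n ih1 ih2 =>
    rw [Qpoly_rec, ih1, ih2,
      show ((n+2:ℕ):ℤ) = (n:ℤ)+2 by push_cast; ring, PU_eval_rec,
      show ((n:ℤ))+1 = ((n+1:ℕ):ℤ) by push_cast; ring]
    ring

lemma PU_grow {x : ℝ} (hx : 2 ≤ x) :
    ∀ n : ℕ, 0 ≤ (PU n).eval x ∧ (x - 1) * (PU n).eval x ≤ (PU (n+1)).eval x := by
  intro n
  induction n with
  | zero => simp [PU_zero_eval, PU_one_eval]
  | succ n ih =>
    obtain ⟨h0, h1⟩ := ih
    have hrec := PU_eval_rec (n : ℤ) x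
    push_cast at h0 h1 hrec ⊢
    constructor
    · nlinarith
    · rw [show ((n:ℤ)+1+1 : ℤ) = (n:ℤ)+2 by ring, hrec]
      nlinarith

lemma PU_one_le {x : ℝ} (hx : 2 ≤ x) (n : ℕ) (hn : 1 ≤ n) : 1 ≤ (PU n).eval x := by
  induction n, hn using Nat.le_induction with
  | base => rw [Nat.cast_one, PU_one_eval]
  | succ n hn ih =>
    have hg := (PU_grow hx n).2
    have h0 := (PU_grow hx n).1
    push_cast at hg h0 ⊢
    nlinarith

lemma Qpoly_eval_2t_pos (l : ℤ) (hl : 0 ≤ l) (k : ℕ) :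
    0 < (Qpoly l k).eval (2*((l:ℝ)+2)) := by
  set x : ℝ := 2*((l:ℝ)+2) with hxdef
  have hl' : (0:ℝ) ≤ (l:ℝ) := by exact_mod_cast hl
  have hx : (2:ℝ) ≤ x := by rw [hxdef]; linarith
  rw [Qpoly_eval]
  have g2 := (PU_grow hx (k+2)).2
  have g1 := (PU_grow hx (k+1)).2
  have p1 := (PU_grow hx (k+1)).1
  have p2 := (PU_grow hx (k+2)).1
  have one2 : 1 ≤ (PU ((k+2:ℕ):ℤ)).eval x := PU_one_le hx (k+2) (by omega)
  push_cast at g2 g1 p1 p2 one2 ⊢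
  rw [show ((k:ℤ)+1+1 : ℤ) = (k:ℤ)+2 by ring] at g1
  rw [show ((k:ℤ)+2+1 : ℤ) = (k:ℤ)+3 by ring] at g2
  have hle : (PU ((k:ℤ)+1)).eval x ≤ (PU ((k:ℤ)+2)).eval x := by nlinarith
  have hx2 : x = 2*(l:ℝ)+4 := by rw [hxdef]; ring
  have hmul := mul_le_mul_of_nonneg_left hle (show (0:ℝ) ≤ (l:ℝ)+1 by linarith)
  nlinarith [g2, hmul, one2]

lemma Qpoly_eval_t_neg (l : ℤ) (hl : 0 ≤ l) (k : ℕ) (hk : 1 ≤ k) :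
    (Qpoly l k).eval ((l:ℝ)+2) < 0 := by
  have hl' : (0:ℝ) ≤ (l:ℝ) := by exact_mod_cast hl
  have h1 := PU_one_le (show (2:ℝ) ≤ (l:ℝ)+2 by linarith) k hk
  rw [Qpoly_eval_t]
  linarith

lemma cos_node_lt (k : ℕ) {r s : ℕ} (hrs : r < s) (hs : s ≤ k+2) :
    2*Real.cos (s*π/(k+2)) < 2*Real.cos (r*π/(k+2)) := by
  have hk2 : (0:ℝ) < (k:ℝ)+2 := by positivity
  have h1 : (0:ℝ) ≤ r*π/(k+2) := by positivity
  have h2 : (s:ℝ)*π/(k+2) ≤ π := by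
    rw [div_le_iff₀ hk2]
    have : (s:ℝ) ≤ (k:ℝ)+2 := by exact_mod_cast hs
    nlinarith [pi_pos]
  have h3 : (r:ℝ)*π/(k+2) < s*π/(k+2) := by
    have : (r:ℝ) < (s:ℝ) := by exact_mod_cast hrs
    have := pi_pos
    gcongr
  have := Real.cos_lt_cos_of_nonneg_of_le_pi h1 h2 h3
  linarith

noncomputable def lo (l : ℤ) (k : ℕ) (r : ℕ) : ℝ :=
  if r = 0 then (l:ℝ)+2 else if r = k+1 then -2 else 2 * Real.cos ((r+1) * π / (k+2))

noncomputable def hi (l : ℤ) (k : ℕ) (r : ℕ) : ℝ :=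
  if r = 0 then 2*((l:ℝ)+2) else 2 * Real.cos (r * π / (k+2))

lemma exists_root (l : ℤ) (hl : 0 ≤ l) (k : ℕ) (hk : 1 ≤ k) (r : ℕ) (hr : r ≤ k+1) :
    ∃ z, lo l k r < z ∧ z < hi l k r ∧ (Qpoly l k).eval z = 0 := by
  have hl' : (0:ℝ) ≤ (l:ℝ) := by exact_mod_cast hl
  have hcont : ∀ a b : ℝ, ContinuousOn (fun x => (Qpoly l k).eval x) (Set.Icc a b) :=
    fun a b => (Qpoly l k).continuous.continuousOn
  have main : ∀ a b : ℝ, a < b → (Qpoly l k).eval a * (Qpoly l k).eval b < 0 →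
      ∃ z, a < z ∧ z < b ∧ (Qpoly l k).eval z = 0 := by
    intro a b hab hsign
    rcases lt_or_ge ((Qpoly l k).eval a) 0 with ha | ha
    · have hb : 0 < (Qpoly l k).eval b := by nlinarith
      have hm : (0:ℝ) ∈ Set.Ioo ((Qpoly l k).eval a) ((Qpoly l k).eval b) := ⟨ha, hb⟩
      obtain ⟨z, hz, hfz⟩ := intermediate_value_Ioo hab.le (hcont a b) hm
      exact ⟨z, hz.1, hz.2, hfz⟩
    · have hb : (Qpoly l k).eval b < 0 := by nlinarith
      have ha' : 0 < (Qpoly l k).eval a := by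
        rcases ha.lt_or_eq with h | h
        · exact h
        · exfalso; nlinarith
      have hm : (0:ℝ) ∈ Set.Ioo ((Qpoly l k).eval b) ((Qpoly l k).eval a) := ⟨hb, ha'⟩
      obtain ⟨z, hz, hfz⟩ := intermediate_value_Ioo' hab.le (hcont a b) hm
      exact ⟨z, hz.1, hz.2, hfz⟩
  rcases eq_or_ne r 0 with h0 | h0
  · subst h0
    simp only [lo, hi, eq_self_iff_true, if_true]
    have hfa := Qpoly_eval_t_neg l hl k hk
    have hfb := Qpoly_eval_2t_pos l hl k
    exact main _ _ (by linarith) (by nlinarith)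
  rcases eq_or_ne r (k+1) with hlast | hlast
  · subst hlast
    simp only [lo, hi, if_neg h0, eq_self_iff_true, if_true]
    push_cast
    have hab : (-2:ℝ) < 2 * Real.cos (((k:ℝ)+1) * π / ((k:ℝ)+2)) := by
      have h := cos_node_lt k (show k+1 < k+2 by omega) (le_refl (k+2))
      push_cast at h
      have hpi : ((k:ℝ)+2)*π/((k:ℝ)+2) = π := by field_simp
      rw [hpi, Real.cos_pi] at h
      linarith
    have hfa : (Qpoly l k).eval (-2) = (-1)^k * ((k:ℝ) + (l:ℝ) + 4) := Qpoly_eval_neg_two l k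
    have hfb : (Qpoly l k).eval (2 * Real.cos (((k+1:ℕ):ℝ) * π / ((k:ℝ) + 2)))
        = (-1)^(k+1) * ((l:ℝ) + 2) := Qpoly_eval_node l k (k+1) (by omega) (le_refl _)
    push_cast at hfb
    refine main _ _ hab ?_
    rw [hfa, hfb]
    have hk0 : (0:ℝ) ≤ (k:ℝ) := Nat.cast_nonneg k
    rcases Nat.even_or_odd k with he | ho
    · rw [he.neg_one_pow, (by simpa using he.add_one : Odd (k+1)).neg_one_pow]; nlinarith
    · rw [ho.neg_one_pow, (by simpa using ho.add_one : Even (k+1)).neg_one_pow]; nlinarith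
  · have hr1 : 1 ≤ r := by omega
    have hrk : r ≤ k := by omega
    simp only [lo, hi, if_neg h0, if_neg hlast]
    push_cast
    have hab : 2 * Real.cos (((r:ℝ)+1) * π / ((k:ℝ)+2)) < 2 * Real.cos ((r:ℝ) * π / ((k:ℝ)+2)) := by
      have h := cos_node_lt k (show r < r+1 by omega) (by omega)
      push_cast at h
      exact h
    have hfa : (Qpoly l k).eval (2 * Real.cos (((r+1:ℕ):ℝ) * π / ((k:ℝ) + 2)))
        = (-1)^(r+1) * ((l:ℝ) + 2) := Qpoly_eval_node l k (r+1) (by omega) (by omega)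
    have hfb : (Qpoly l k).eval (2 * Real.cos (((r:ℕ):ℝ) * π / ((k:ℝ) + 2)))
        = (-1)^r * ((l:ℝ) + 2) := Qpoly_eval_node l k r hr1 (by omega)
    push_cast at hfa
    refine main _ _ hab ?_
    rw [hfa, hfb]
    rcases Nat.even_or_odd r with he | ho
    · rw [he.neg_one_pow, (by simpa using he.add_one : Odd (r+1)).neg_one_pow]; nlinarith
    · rw [ho.neg_one_pow, (by simpa using ho.add_one : Even (r+1)).neg_one_pow]; nlinarith

lemma hi_le_lo (l : ℤ) (hl : 0 ≤ l) (k : ℕ) {i j : ℕ} (hij : i < j) (hj : j ≤ k+1) :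
    hi l k j ≤ lo l k i := by
  have hl' : (0:ℝ) ≤ (l:ℝ) := by exact_mod_cast hl
  have hj0 : j ≠ 0 := by omega
  rcases eq_or_ne i 0 with rfl | hi0
  · simp only [lo, hi, if_neg hj0, eq_self_iff_true, if_true]
    have h := cos_node_lt k (show 0 < j by omega) (by omega)
    norm_num at h
    linarith
  · have hik : i ≠ k+1 := by omega
    simp only [lo, hi, if_neg hj0, if_neg hi0, if_neg hik]
    rcases eq_or_ne j (i+1) with rfl | hne
    · push_cast
      norm_num
    · have h := cos_node_lt k (show i+1 < j by omega) (by omega)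
      push_cast at h ⊢
      linarith

/-- for integers `l ≥ 0` and `k ≥ 1`, `Qpoly l k` has `k+2` distinct real
roots `y 0 > y 1 > … > y (k+1)` with `y 0 > l+2`,
`2 cos ((r+1)π/(k+2)) < y r < 2 cos (rπ/(k+2))` for `1 ≤ r ≤ k`, and
`-2 < y (k+1) < 2 cos ((k+1)π/(k+2))`. -/
theorem stmt11 (l : ℤ) (hl : 0 ≤ l) (k : ℕ) (hk : 1 ≤ k) :
    ∃ y : Fin (k + 2) → ℝ,
      (∀ i j : Fin (k + 2), i < j → y j < y i) ∧
      (∀ i : Fin (k + 2), (Qpoly l k).eval (y i) = 0) ∧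
      ((l : ℝ) + 2 < y 0) ∧
      (∀ r : ℕ, ∀ _h1 : 1 ≤ r, ∀ h2 : r ≤ k,
        2 * Real.cos ((r + 1) * Real.pi / (k + 2)) < y ⟨r, by omega⟩ ∧
          y ⟨r, by omega⟩ < 2 * Real.cos (r * Real.pi / (k + 2))) ∧
      (-2 < y (Fin.last (k + 1)) ∧
        y (Fin.last (k + 1)) < 2 * Real.cos ((k + 1) * Real.pi / (k + 2))) := by
  have hex : ∀ i : Fin (k+2), ∃ z, lo l k i < z ∧ z < hi l k i ∧ (Qpoly l k).eval z = 0 :=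
    fun i => exists_root l hl k hk i (by omega)
  choose y hy1 hy2 hy3 using hex
  refine ⟨y, ?_, ?_, ?_, ?_, ?_⟩
  · intro i j hij
    have h1 := hy1 i
    have h2 := hy2 j
    have h3 := hi_le_lo l hl k (show (i:ℕ) < (j:ℕ) from hij) (by omega)
    linarith
  · intro i
    exact hy3 i
  · have h := hy1 0
    simpa [lo, show ((0 : Fin (k+2)) : ℕ) = 0 from rfl] using h
  · intro r h1 h2
    have hs1 := hy1 ⟨r, by omega⟩
    have hs2 := hy2 ⟨r, by omega⟩
    constructor
    · have h := hs1
      simp only [lo, Fin.val_mk, if_neg (show r ≠ 0 by omega),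
        if_neg (show r ≠ k+1 by omega)] at h
      exact h
    · have h := hs2
      simp only [hi, Fin.val_mk, if_neg (show r ≠ 0 by omega)] at h
      exact h
  · have hs1 := hy1 (Fin.last (k+1))
    have hs2 := hy2 (Fin.last (k+1))
    constructor
    · have h := hs1
      simp only [lo, Fin.val_last, if_neg (show k+1 ≠ 0 by omega), eq_self_iff_true,
        if_true] at h
      exact h
    · have h := hs2
      simp only [hi, Fin.val_last, if_neg (show k+1 ≠ 0 by omega)] at h
      push_cast at h ⊢
      exact h
end

section
/- For every integer l ≥ 1, the real polynomials H^{(l)}_{−1} and H^{(l)}_{−2} factor as H^{(l)}_{−1} = (X+2)·(X−(l−1))·(X−(l+1)) and H^{(l)}_{−2} = (l+2)·(X+1)·(X−l). -/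
/-- `Hpoly l k`, the paper's closed formula for the hook-transpose series
`P^{(l+1,1)^T}_{l+4+k}`:
`PU (k+5) - 2(l-1) PU (k+4) + l(l-5) PU (k+3) + 3l(l-1) PU (k+2)
  + 2(l²-2l-1) PU (k+1) + l(l-1) PU k - (l+1) PU (k-1)`. -/
noncomputable def Hpoly (l : ℤ) (k : ℤ) : Polynomial ℝ :=
  PU (k + 5) - Polynomial.C (2 * ((l : ℝ) - 1)) * PU (k + 4)
    + Polynomial.C ((l : ℝ) * ((l : ℝ) - 5)) * PU (k + 3)
    + Polynomial.C (3 * (l : ℝ) * ((l : ℝ) - 1)) * PU (k + 2)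
    + Polynomial.C (2 * ((l : ℝ) ^ 2 - 2 * (l : ℝ) - 1)) * PU (k + 1)
    + Polynomial.C ((l : ℝ) * ((l : ℝ) - 1)) * PU k
    - Polynomial.C ((l : ℝ) + 1) * PU (k - 1)


open Polynomial Polynomial.Chebyshev in
lemma U_three : U ℝ 3 = 8 * X ^ 3 - 4 * X := by
  have := U_add_two ℝ 1
  norm_num [U_two, U_one] at this
  rw [this]; ring

open Polynomial Polynomial.Chebyshev in
lemma PU_four : PU 4 = X ^ 3 - 2 * X := by
  apply Polynomial.funext; intro x
  simp [PU, show (4:ℤ)-1 = 3 by norm_num, U_three, eval_comp]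
  ring

open Polynomial Polynomial.Chebyshev in
lemma PU_three : PU 3 = X ^ 2 - 1 := by
  apply Polynomial.funext; intro x
  simp [PU, show (3:ℤ)-1 = 2 by norm_num, U_two, eval_comp]
  ring

open Polynomial Polynomial.Chebyshev in
lemma PU_two : PU 2 = X := by
  apply Polynomial.funext; intro x
  simp [PU, show (2:ℤ)-1 = 1 by norm_num, U_one, eval_comp]

open Polynomial Polynomial.Chebyshev in
lemma PU_one : PU 1 = 1 := by simp [PU, U_zero]

open Polynomial Polynomial.Chebyshev in
lemma PU_zero : PU 0 = 0 := by
  simp [PU, show (0:ℤ)-1 = -1 by norm_num, U_neg_one]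

open Polynomial Polynomial.Chebyshev in
lemma PU_neg_one : PU (-1) = -1 := by
  simp [PU, show (-1:ℤ)-1 = -2 by norm_num, U_neg_two]

open Polynomial Polynomial.Chebyshev in
lemma PU_neg_two : PU (-2) = -X := by
  apply Polynomial.funext; intro x
  rw [PU, show (-2:ℤ)-1 = -1-2 by norm_num, U_neg_sub_two]
  simp [U_one, eval_comp]

open Polynomial Polynomial.Chebyshev in
lemma PU_neg_three : PU (-3) = 1 - X ^ 2 := by
  apply Polynomial.funext; intro x
  rw [PU, show (-3:ℤ)-1 = -2-2 by norm_num, U_neg_sub_two]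
  simp [U_two, eval_comp]
  ring

/-- for `l ≥ 1`,
`Hpoly l (-1) = (X+2)(X-(l-1))(X-(l+1))` and `Hpoly l (-2) = (l+2)(X+1)(X-l)`. -/
theorem stmt13 (l : ℤ) (hl : 1 ≤ l) :
    Hpoly l (-1) =
        (Polynomial.X + 2) * (Polynomial.X - Polynomial.C ((l : ℝ) - 1)) *
          (Polynomial.X - Polynomial.C ((l : ℝ) + 1)) ∧
      Hpoly l (-2) =
        Polynomial.C ((l : ℝ) + 2) * (Polynomial.X + 1) *
          (Polynomial.X - Polynomial.C (l : ℝ)) := by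
  constructor
  · rw [Hpoly, show (-1:ℤ)+5 = 4 by norm_num, show (-1:ℤ)+4 = 3 by norm_num,
      show (-1:ℤ)+3 = 2 by norm_num, show (-1:ℤ)+2 = 1 by norm_num,
      show (-1:ℤ)+1 = 0 by norm_num, show (-1:ℤ)-1 = -2 by norm_num,
      PU_four, PU_three, PU_two, PU_one, PU_zero, PU_neg_one, PU_neg_two]
    apply Polynomial.funext; intro x
    simp
    ring
  · rw [Hpoly, show (-2:ℤ)+5 = 3 by norm_num, show (-2:ℤ)+4 = 2 by norm_num,
      show (-2:ℤ)+3 = 1 by norm_num, show (-2:ℤ)+2 = 0 by norm_num,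
      show (-2:ℤ)+1 = -1 by norm_num, show (-2:ℤ)-1 = -3 by norm_num,
      PU_three, PU_two, PU_one, PU_zero, PU_neg_one, PU_neg_two, PU_neg_three]
    apply Polynomial.funext; intro x
    simp
    ring
end
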